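/- Let Λ be a Dedekind domain, M a finitely generated projective Λ-module of rank n, V a proper nonzero summand of M of rank k with k ≥ 2, and X = S_M(⊆, ⊇V). Let (A,B) ∈ X. Then the maps (P,Q) ↦ (P ⊓ B, Q) and (Z,W) ↦ (Z ⊕ A, W) are mutually inverse order isomorphisms between the upper link Link^>_X(A,B) = {(P,Q) ∈ X : A ⊊ P, Q ⊊ B} and the poset S_B(⊆, ⊇V) = {(Z,W) : Z, W proper summands of B, Z ⊕ W = B, W ⊇ V}. -/

import Mathlib

open CategoryTheory OrderDual

/-- The rank of a finitely generated projective module over a domain: the dimension over the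
fraction field of the base change to the fraction field. -/
noncomputable def rk (Λ : Type) [CommRing Λ] (M : Type) [AddCommGroup M] [Module Λ M] : ℕ :=
  Module.finrank (FractionRing Λ) (TensorProduct Λ (FractionRing Λ) M)

/-- The geometric realization (topological realization of the nerve) of a poset. -/
noncomputable def pReal (P : Type) [Preorder P] : TopCat :=
  SSet.toTop.obj (nerveFunctor.obj (Cat.of P))

/-- The map of geometric realizations induced by a map of posets. -/
noncomputable def pRealMap {P Q : Type} [Preorder P] [Preorder Q] (f : P →o Q) :
    pReal P ⟶ pReal Q :=
  SSet.toTop.map (nerveFunctor.map f.monotone.functor.toCatHom)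

/-- The base point of the `d`-dimensional sphere. -/
noncomputable def spherePt (d : ℕ) : Metric.sphere (0 : EuclideanSpace ℝ (Fin (d + 1))) 1 :=
  ⟨EuclideanSpace.single 0 1, by simp⟩

/-- The gluing relation for a wedge of spheres. -/
def WedgeRel (I : Type) (d : ℕ) :
    ((Σ _ : I, Metric.sphere (0 : EuclideanSpace ℝ (Fin (d + 1))) 1) ⊕ Unit) →
      ((Σ _ : I, Metric.sphere (0 : EuclideanSpace ℝ (Fin (d + 1))) 1) ⊕ Unit) → Prop :=
  fun x y => ∃ i, x = Sum.inl ⟨i, spherePt d⟩ ∧ y = Sum.inr ()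

/-- The wedge of `d`-dimensional spheres indexed by `I` (a one-point space if `I` is empty),
obtained by gluing the base points of all the spheres to a single point. -/
def WedgeOfSpheres (I : Type) (d : ℕ) : Type :=
  Quot (WedgeRel I d)

noncomputable instance (I : Type) (d : ℕ) : TopologicalSpace (WedgeOfSpheres I d) :=
  inferInstanceAs (TopologicalSpace (Quot (WedgeRel I d)))

/-- `X` is homotopy equivalent to a wedge of `d`-dimensional spheres
(over some, possibly empty, index set). -/
def HomotopyEquivToWedge (X : Type) [TopologicalSpace X] (d : ℕ) : Prop :=
  ∃ I : Type, Nonempty (ContinuousMap.HomotopyEquiv X (WedgeOfSpheres I d))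

section Posets

variable (Λ : Type) [CommRing Λ] (M : Type) [AddCommGroup M] [Module Λ M]

/-- The poset of pairs `(Z, W)` of proper summands of `N` with `Z ⊕ W = N`
(i.e. `Z ⊓ W = ⊥`, `Z ⊔ W = N`, `Z ≠ N`, `W ≠ N`), ordered by
`(Z, W) ≤ (Z', W')` iff `Z ⊆ Z'` and `W ⊇ W'`.  For `N = ⊤` this is the split building
poset `S_M`. -/
abbrev SPosetIn (N : Submodule Λ M) : Type :=
  {ZW : Submodule Λ M × (Submodule Λ M)ᵒᵈ //
    ZW.1 ⊓ ofDual ZW.2 = ⊥ ∧ ZW.1 ⊔ ofDual ZW.2 = N ∧ ZW.1 ≠ N ∧ ofDual ZW.2 ≠ N}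

/-- The poset `T_M` of proper nonzero summands of `M`, ordered by inclusion. -/
abbrev TPoset : Type :=
  {P : Submodule Λ M // (∃ Q, P ⊓ Q = ⊥ ∧ P ⊔ Q = ⊤) ∧ P ≠ ⊥ ∧ P ≠ ⊤}

end Posets

section Filtration

variable (Λ : Type) [CommRing Λ] (M : Type) [AddCommGroup M] [Module Λ M]

/-- The poset `X = S_M(⊆, ⊇V)` of pairs `(P, Q) ∈ S_M` with `Q ⊇ V`. -/
abbrev XT (V : Submodule Λ M) : Type :=
  {x : SPosetIn Λ M ⊤ // V ≤ ofDual x.1.2}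

/-- `X₀ = S_M(⊆H, ⊇V)`, the set of `(P, Q) ∈ X` with `P ⊆ H`. -/
def X0set (V H : Submodule Λ M) : Set (XT Λ M V) :=
  {x | x.1.1.1 ≤ H}

/-- `T_j`, the set of `(A, B) ∈ X` with `rank A = n - k - 1 - j` and `A ⊄ H`. -/
def Tset (V H : Submodule Λ M) (n k j : ℕ) : Set (XT Λ M V) :=
  {x | rk Λ ↥(x.1.1.1) = n - k - 1 - j ∧ ¬ x.1.1.1 ≤ H}

/-- `X_i = X₀ ∪ T₀ ∪ ⋯ ∪ T_i`. -/
def Xset (V H : Submodule Λ M) (n k i : ℕ) : Set (XT Λ M V) :=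
  X0set Λ M V H ∪ ⋃ j ≤ i, Tset Λ M V H n k j

/-!
Only the modular law is involved. If `a` and `b` are complements in a bounded modular lattice,
then `p ↦ p ⊓ b` and `z ↦ z ⊔ a` are inverse order isomorphisms between the elements above `a`
and those below `b` (the diamond isomorphism). Applied to the first component of a pair while
keeping the second one fixed, they exchange proper splittings `p ⊕ q = ⊤` with `a < p`, `q < b`
and proper splittings `z ⊕ w = b`; the condition `V ≤ q` only concerns the fixed component.
-/

section SplitPairs

variable {α : Type*} [Lattice α] [BoundedOrder α]

def IsProperSplit (n z w : α) : Prop :=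
  z ⊓ w = ⊥ ∧ z ⊔ w = n ∧ z ≠ n ∧ w ≠ n

/-- The order dual on the second factor gives `(z, w) ≤ (z', w')` iff `z ≤ z'` and `w' ≤ w`;
`SPosetIn Λ M N` is the case `α = Submodule Λ M`. -/
abbrev SplitPoset (n : α) : Type _ :=
  {p : α × αᵒᵈ // IsProperSplit n p.1 (ofDual p.2)}

namespace IsProperSplit

variable {a b n z w : α}

theorem left_le (hs : IsProperSplit n z w) : z ≤ n :=
  le_sup_left.trans hs.2.1.le

theorem right_le (hs : IsProperSplit n z w) : w ≤ n :=
  le_sup_right.trans hs.2.1.le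

theorem right_lt (hs : IsProperSplit n z w) : w < n :=
  lt_of_le_of_ne hs.right_le hs.2.2.2

theorem lt_sup_left (h : IsCompl a b) (hs : IsProperSplit b z w) : a < z ⊔ a := by
  refine lt_of_le_of_ne le_sup_right fun ha => hs.2.2.2 ?_
  have hz : z = ⊥ := le_bot_iff.mp (h.inf_eq_bot ▸ le_inf (ha ▸ le_sup_left) hs.left_le)
  simpa [hz] using hs.2.1

end IsProperSplit

variable [IsModularLattice α] {a b : α}

namespace IsCompl

theorem inf_right_sup_left (h : IsCompl a b) {p : α} (hp : a ≤ p) : p ⊓ b ⊔ a = p := by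
  rw [sup_comm, inf_comm, ← sup_inf_assoc_of_le _ hp, h.sup_eq_top, top_inf_eq]

theorem sup_left_inf_right (h : IsCompl a b) {z : α} (hz : z ≤ b) : (z ⊔ a) ⊓ b = z := by
  rw [sup_inf_assoc_of_le _ hz, h.inf_eq_bot, sup_bot_eq]

theorem inf_right_le_inf_right_iff (h : IsCompl a b) {p p' : α} (hp : a ≤ p) (hp' : a ≤ p') :
    p ⊓ b ≤ p' ⊓ b ↔ p ≤ p' := by
  refine ⟨fun hle => ?_, fun hle => inf_le_inf_right b hle⟩
  rw [← h.inf_right_sup_left hp, ← h.inf_right_sup_left hp']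
  exact sup_le_sup_right hle a

end IsCompl

namespace IsProperSplit

variable {z w : α}

theorem inf_right (h : IsCompl a b) {p q : α} (hs : IsProperSplit ⊤ p q) (hap : a < p)
    (hqb : q < b) : IsProperSplit b (p ⊓ b) q := by
  obtain ⟨hpq, hsup, hp, -⟩ := hs
  refine ⟨?_, ?_, fun hb => hp ?_, hqb.ne⟩
  · exact le_bot_iff.mp (hpq ▸ inf_le_inf_right q inf_le_left)
  · rw [sup_comm, ← sup_inf_assoc_of_le _ hqb.le, sup_comm, hsup, top_inf_eq]
  · rw [← h.inf_right_sup_left hap.le, hb, sup_comm, h.sup_eq_top]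

theorem sup_left (h : IsCompl a b) (hs : IsProperSplit b z w) :
    IsProperSplit ⊤ (z ⊔ a) w := by
  have hzb := hs.left_le
  have hwb := hs.right_le
  obtain ⟨hzw, hsup, hz, hw⟩ := hs
  refine ⟨?_, ?_, fun htop => hz ?_, fun htop => hw ?_⟩
  · rw [← inf_eq_right.mpr hwb, ← inf_assoc, h.sup_left_inf_right hzb, hzw]
  · rw [sup_right_comm, hsup, sup_comm, h.sup_eq_top]
  · rw [← h.sup_left_inf_right hzb, htop, top_inf_eq]
  · exact htop.trans (top_le_iff.mp (htop ▸ hwb)).symm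

end IsProperSplit

def linkSplitOrderIso (h : IsCompl a b) (V : α) :
    {y : {s : SplitPoset (⊤ : α) // V ≤ ofDual s.1.2} // a < y.1.1.1 ∧ ofDual y.1.1.2 < b} ≃o
      {z : SplitPoset b // V ≤ ofDual z.1.2} where
  toFun y := ⟨⟨(y.1.1.1.1 ⊓ b, y.1.1.1.2), y.1.1.2.inf_right h y.2.1 y.2.2⟩, y.1.2⟩
  invFun z := ⟨⟨⟨(z.1.1.1 ⊔ a, z.1.1.2), z.1.2.sup_left h⟩, z.2⟩, z.1.2.lt_sup_left h,
    z.1.2.right_lt⟩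
  left_inv y := Subtype.ext <| Subtype.ext <| Subtype.ext <|
    Prod.ext (h.inf_right_sup_left y.2.1.le) rfl
  right_inv z := Subtype.ext <| Subtype.ext <|
    Prod.ext (h.sup_left_inf_right z.1.2.left_le) rfl
  map_rel_iff' {y y'} := (h.inf_right_le_inf_right_iff y.2.1.le y'.2.1.le).and Iff.rfl

end SplitPairs

theorem statement7_general (Λ : Type) [CommRing Λ]
    (M : Type) [AddCommGroup M] [Module Λ M]
    (V : Submodule Λ M)
    (x : XT Λ M V) :
    ∃ e : {y : XT Λ M V //
            x.1.1.1 < y.1.1.1 ∧ ofDual y.1.1.2 < ofDual x.1.1.2} ≃o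
        {z : SPosetIn Λ M (ofDual x.1.1.2) // V ≤ ofDual z.1.2},
      (∀ y, (e y).1.1.1 = y.1.1.1.1 ⊓ ofDual x.1.1.2 ∧
        ofDual (e y).1.1.2 = ofDual y.1.1.1.2) ∧
      (∀ z, (e.symm z).1.1.1.1 = z.1.1.1 ⊔ x.1.1.1 ∧
        ofDual (e.symm z).1.1.1.2 = ofDual z.1.1.2) :=
  ⟨linkSplitOrderIso (IsCompl.of_eq x.1.2.1 x.1.2.2.1) V,
    fun _ => ⟨rfl, rfl⟩, fun _ => ⟨rfl, rfl⟩⟩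

/-- Claim 2 (the isomorphism): `(P,Q) ↦ (P ⊓ B, Q)` and `(Z,W) ↦ (Z ⊔ A, W)` are mutually
inverse order isomorphisms `Link^>_X(A,B) ≃o S_B(⊆, ⊇V)`. -/
theorem statement7 (Λ : Type) [CommRing Λ] [IsDedekindDomain Λ]
    (M : Type) [AddCommGroup M] [Module Λ M] [Module.Finite Λ M] [Module.Projective Λ M]
    (n : ℕ) (hn : rk Λ M = n) (k : ℕ) (V : Submodule Λ M) (hVsum : ∃ W, V ⊓ W = ⊥ ∧ V ⊔ W = ⊤)
    (hV0 : V ≠ ⊥) (hVtop : V ≠ ⊤) (hVrk : rk Λ ↥V = k) (hk2 : 2 ≤ k)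
    (x : XT Λ M V) :
    ∃ e : {y : XT Λ M V //
            x.1.1.1 < y.1.1.1 ∧ ofDual y.1.1.2 < ofDual x.1.1.2} ≃o
        {z : SPosetIn Λ M (ofDual x.1.1.2) // V ≤ ofDual z.1.2},
      (∀ y, (e y).1.1.1 = y.1.1.1.1 ⊓ ofDual x.1.1.2 ∧
        ofDual (e y).1.1.2 = ofDual y.1.1.1.2) ∧
      (∀ z, (e.symm z).1.1.1.1 = z.1.1.1 ⊔ x.1.1.1 ∧
        ofDual (e.symm z).1.1.1.2 = ofDual z.1.1.2) :=
  statement7_general Λ M V x
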